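/- arXiv:1108.4544 — 5 statements merged into one kernel-verified Lean document; each statement's English description precedes it below -/
import Mathlib

section
/- Let k ≥ 2 be an integer and y ∈ ℝⁿ with |y| = 1. Define W(x) = (1/2)x − (x−y)/|x−y|^k − ((k−2)/2) ∫₀¹ (tx−y)/|tx−y|^k dt for x in the open unit ball with x ≠ y. Then ⟨W(x), x⟩ = (1/2)(1−|x|²)(1/|x−y|^k − 1). -/
open scoped InnerProductSpace

theorem stmt_2 (n k : ℕ) (hk : 2 ≤ k) (y x : EuclideanSpace ℝ (Fin n)) (hy : ‖y‖ = 1)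
    (W : EuclideanSpace ℝ (Fin n) → EuclideanSpace ℝ (Fin n))
    (hW : ∀ z, W z = (1/2 : ℝ) • z - (‖z - y‖ ^ k)⁻¹ • (z - y)
      - (((k : ℝ) - 2)/2) • ∫ t in (0:ℝ)..1, (‖t • z - y‖ ^ k)⁻¹ • (t • z - y))
    (hx : ‖x‖ < 1) (hxy : x ≠ y) :
    ⟪W x, x⟫_ℝ = (1/2) * (1 - ‖x‖ ^ 2) * ((‖x - y‖ ^ k)⁻¹ - 1) := by
  set g : ℝ → EuclideanSpace ℝ (Fin n) := fun t => t • x - y with hg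
  -- the curve avoids zero on [0,1]
  have hgne : ∀ t ∈ Set.uIcc (0:ℝ) 1, g t ≠ 0 := by
    intro t ht h0
    rw [Set.uIcc_of_le zero_le_one] at ht
    simp only [hg] at h0
    have h1 : t • x = y := by rwa [sub_eq_zero] at h0
    have h2 : ‖t • x‖ ≤ ‖x‖ := by
      rw [norm_smul, Real.norm_eq_abs, abs_of_nonneg ht.1]
      nlinarith [norm_nonneg x, ht.2]
    rw [h1, hy] at h2; linarith
  have hgnorm : ∀ t ∈ Set.uIcc (0:ℝ) 1, (0:ℝ) < ‖g t‖ := fun t ht =>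
    norm_pos_iff.mpr (hgne t ht)
  have hgc : Continuous g := by
    apply Continuous.sub _ continuous_const
    exact continuous_id.smul continuous_const
  -- the vector integrand is interval integrable
  have hint1 : IntervalIntegrable (fun t => (‖g t‖ ^ k)⁻¹ • g t)
      MeasureTheory.volume (0:ℝ) 1 := by
    apply ContinuousOn.intervalIntegrable
    show ContinuousOn ((fun t => (‖g t‖ ^ k)⁻¹) • g) _
    apply ContinuousOn.smul _ hgc.continuousOn
    apply ContinuousOn.inv₀ (by fun_prop)
    intro t ht
    exact pow_ne_zero _ (norm_ne_zero_iff.mpr (hgne t ht))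
  -- commute inner product with the integral
  have hcomm : ⟪∫ t in (0:ℝ)..1, (‖g t‖ ^ k)⁻¹ • g t, x⟫_ℝ
      = ∫ t in (0:ℝ)..1, (‖g t‖ ^ k)⁻¹ * ⟪g t, x⟫_ℝ := by
    have h := ((innerSL ℝ x).intervalIntegral_comp_comm hint1).symm
    rw [real_inner_comm]
    rw [show ⟪x, ∫ t in (0:ℝ)..1, (‖g t‖ ^ k)⁻¹ • g t⟫_ℝ
      = (innerSL ℝ x) (∫ t in (0:ℝ)..1, (‖g t‖ ^ k)⁻¹ • g t) from rfl, h]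
    apply intervalIntegral.integral_congr
    intro t _
    simp only [innerSL_apply_apply, inner_smul_right]
    rw [real_inner_comm]
  -- fundamental theorem of calculus for F t = (‖g t‖^2) ^ ((2-k)/2)
  set F : ℝ → ℝ := fun t => (‖g t‖ ^ 2) ^ (((2:ℝ) - k)/2) with hF
  have hderiv : ∀ t ∈ Set.uIcc (0:ℝ) 1,
      HasDerivAt F ((2 - (k:ℝ)) * (‖g t‖ ^ k)⁻¹ * ⟪g t, x⟫_ℝ) t := by
    intro t ht
    have hgt : HasDerivAt g x t := by
      rw [hg]; simpa using ((hasDerivAt_id t).smul_const x).sub_const y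
    have hsq : HasDerivAt (fun s => (‖g s‖ ^ 2 : ℝ)) (2 * ⟪g t, x⟫_ℝ) t := by
      have h := hgt.inner ℝ hgt
      simp only [real_inner_self_eq_norm_sq] at h ⊢
      exact h.congr_deriv (by rw [real_inner_comm x]; ring)
    have hne : (‖g t‖ ^ 2 : ℝ) ≠ 0 := pow_ne_zero _ (ne_of_gt (hgnorm t ht))
    have h := hsq.rpow_const (p := ((2:ℝ) - k)/2) (Or.inl hne)
    rw [hF]
    convert h using 1
    have hpow : (‖g t‖ ^ 2 : ℝ) ^ (((2:ℝ) - k)/2 - 1) = (‖g t‖ ^ k)⁻¹ := by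
      rw [← Real.rpow_natCast (‖g t‖) 2, ← Real.rpow_mul (norm_nonneg _),
        ← Real.rpow_natCast (‖g t‖) k, ← Real.rpow_neg (norm_nonneg _)]
      congr 1; push_cast; ring
    rw [hpow]; ring
  have hint2 : IntervalIntegrable (fun t => (2 - (k:ℝ)) * (‖g t‖ ^ k)⁻¹ * ⟪g t, x⟫_ℝ)
      MeasureTheory.volume (0:ℝ) 1 := by
    apply ContinuousOn.intervalIntegrable
    apply ContinuousOn.mul
    · apply ContinuousOn.mul continuousOn_const
      apply ContinuousOn.inv₀ (by fun_prop)
      intro t ht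
      exact pow_ne_zero _ (norm_ne_zero_iff.mpr (hgne t ht))
    · exact (hgc.inner continuous_const).continuousOn
  have hftc : ∫ t in (0:ℝ)..1, (2 - (k:ℝ)) * (‖g t‖ ^ k)⁻¹ * ⟪g t, x⟫_ℝ = F 1 - F 0 :=
    intervalIntegral.integral_eq_sub_of_hasDerivAt hderiv hint2
  -- compute F 0 and F 1
  have hF0 : F 0 = 1 := by
    have h0 : g 0 = -y := by simp [hg]
    simp [hF, h0, hy, Real.one_rpow]
  have hxyne : x - y ≠ 0 := sub_ne_zero.mpr hxy
  have hxynorm : (0:ℝ) < ‖x - y‖ := norm_pos_iff.mpr hxyne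
  have hg1 : g 1 = x - y := by simp [hg]
  have hF1 : F 1 = ‖x - y‖ ^ 2 * (‖x - y‖ ^ k)⁻¹ := by
    rw [hF]
    simp only [hg1]
    rw [← Real.rpow_natCast (‖x - y‖) 2, ← Real.rpow_mul (norm_nonneg _)]
    have he : ((2:ℕ):ℝ) * (((2:ℝ) - k)/2) = ((2:ℕ):ℝ) + (-(k:ℝ)) := by push_cast; ring
    rw [he, Real.rpow_add hxynorm, Real.rpow_neg (norm_nonneg _),
      Real.rpow_natCast, Real.rpow_natCast]
  -- value of the scaled scalar integral
  simp_rw [mul_assoc] at hftc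
  rw [intervalIntegral.integral_const_mul] at hftc
  have hintval : ((k:ℝ) - 2)/2 * ∫ t in (0:ℝ)..1, (‖g t‖ ^ k)⁻¹ * ⟪g t, x⟫_ℝ
      = -(1/2) * (F 1 - F 0) := by
    rw [← hftc]; ring
  rw [hF0, hF1] at hintval
  -- expand inner products
  rw [hW x]
  have hIeq : (∫ t in (0:ℝ)..1, (‖t • x - y‖ ^ k)⁻¹ • (t • x - y))
      = ∫ t in (0:ℝ)..1, (‖g t‖ ^ k)⁻¹ • g t := rfl
  rw [hIeq, inner_sub_left, inner_sub_left, real_inner_smul_left, real_inner_smul_left,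
    real_inner_smul_left, inner_sub_left, hcomm, hintval]
  have hnormsq : ⟪x, x⟫_ℝ = ‖x‖ ^ 2 := real_inner_self_eq_norm_sq x
  have hxy2 : ‖x - y‖ ^ 2 = ‖x‖ ^ 2 - 2 * ⟪y, x⟫_ℝ + 1 := by
    rw [← real_inner_self_eq_norm_sq, inner_sub_left, inner_sub_right, inner_sub_right,
      real_inner_self_eq_norm_sq, real_inner_self_eq_norm_sq, hy,
      real_inner_comm x y]
    ring
  rw [hnormsq, hxy2]
  ring
end

section
/- Let k ≥ 2 be an integer and y ∈ ℝⁿ with |y| = 1. Define W(x) = (1/2)x − (x−y)/|x−y|^k − ((k−2)/2) ∫₀¹ (tx−y)/|tx−y|^k dt. Then for every x on the unit sphere with x ≠ y, W(x) is tangent to the sphere, i.e. ⟨W(x), x⟩ = 0. -/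
open scoped InnerProductSpace

theorem stmt_3 (n k : ℕ) (hk : 2 ≤ k) (y x : EuclideanSpace ℝ (Fin n)) (hy : ‖y‖ = 1)
    (W : EuclideanSpace ℝ (Fin n) → EuclideanSpace ℝ (Fin n))
    (hW : ∀ z, W z = (1/2 : ℝ) • z - (‖z - y‖ ^ k)⁻¹ • (z - y)
      - (((k : ℝ) - 2)/2) • ∫ t in (0:ℝ)..1, (‖t • z - y‖ ^ k)⁻¹ • (t • z - y))
    (hx : ‖x‖ = 1) (hxy : x ≠ y) :
    ⟪W x, x⟫_ℝ = 0 := by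
  have hxy' : x - y ≠ 0 := sub_ne_zero.mpr hxy
  have hd : (0:ℝ) < ‖x - y‖ := norm_pos_iff.mpr hxy'
  set c : ℝ := ⟪x, y⟫_ℝ with hc
  have hxx : ⟪x, x⟫_ℝ = 1 := by rw [real_inner_self_eq_norm_sq, hx]; norm_num
  have hnsq : ‖x - y‖ ^ 2 = 2 - 2 * c := by
    have hyx : ⟪y, x⟫_ℝ = c := by rw [hc, real_inner_comm]
    rw [← real_inner_self_eq_norm_sq, inner_sub_sub_self, hxx, real_inner_self_eq_norm_sq, hy, hyx]
    ring
  have hune : ∀ t ∈ Set.uIcc (0:ℝ) 1, t • x - y ≠ 0 := by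
    intro t ht hz
    rw [Set.uIcc_of_le (by norm_num), Set.mem_Icc] at ht
    have h1 : t • x = y := by rwa [sub_eq_zero] at hz
    have h2 : |t| = 1 := by
      have := congrArg norm h1
      rwa [norm_smul, hx, mul_one, hy, Real.norm_eq_abs] at this
    have ht1 : t = 1 := by
      rcases abs_cases t with h | h
      · linarith [h.1]
      · linarith [h.1, h.2, ht.1]
    rw [ht1, one_smul] at h1
    exact hxy h1
  -- continuity and integrability of the integrand
  have hcontu : Continuous fun t : ℝ => t • x - y :=
    (continuous_id.smul continuous_const).sub continuous_const
  have hnz : ∀ t ∈ Set.uIcc (0:ℝ) 1, (‖t • x - y‖ ^ k) ≠ 0 := fun t ht =>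
    pow_ne_zero _ (norm_ne_zero_iff.mpr (hune t ht))
  have hcontg : ContinuousOn (fun t : ℝ => (‖t • x - y‖ ^ k)⁻¹ • (t • x - y)) (Set.uIcc 0 1) :=
    (((hcontu.norm.pow k).continuousOn).inv₀ hnz).smul hcontu.continuousOn
  have hint : IntervalIntegrable (fun t : ℝ => (‖t • x - y‖ ^ k)⁻¹ • (t • x - y))
      MeasureTheory.volume 0 1 := hcontg.intervalIntegrable
  have hIntInner : ⟪x, ∫ t in (0:ℝ)..1, (‖t • x - y‖ ^ k)⁻¹ • (t • x - y)⟫_ℝ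
      = ∫ t in (0:ℝ)..1, (‖t • x - y‖ ^ k)⁻¹ * ⟪x, t • x - y⟫_ℝ := by
    rw [← innerSL_apply_apply, ← (innerSL ℝ x).intervalIntegral_comp_comm hint]
    congr 1
    ext t
    rw [innerSL_apply_apply, real_inner_smul_right]
  have hxu : ∀ t : ℝ, ⟪x, t • x - y⟫_ℝ = t - c := by
    intro t
    rw [inner_sub_right, real_inner_smul_right, hxx, ← hc]
    ring
  -- expand the inner product
  have hWx : ⟪W x, x⟫_ℝ = 1/2 - (‖x - y‖ ^ k)⁻¹ * (1 - c)
      - (((k:ℝ) - 2)/2) * ∫ t in (0:ℝ)..1, (‖t • x - y‖ ^ k)⁻¹ * ⟪x, t • x - y⟫_ℝ := by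
    rw [hW x, real_inner_comm, inner_sub_right, inner_sub_right, real_inner_smul_right,
      real_inner_smul_right, real_inner_smul_right, hxx, hIntInner, inner_sub_right, hxx,
      ← hc]
    ring
  rcases eq_or_lt_of_le hk with h2 | h3
  · -- k = 2
    subst h2
    have h2c : (2:ℝ) - 2*c ≠ 0 := by rw [← hnsq]; positivity
    rw [hWx, hnsq]
    norm_num
    have h1c' : (1:ℝ) - c ≠ 0 := by intro h; apply h2c; linarith
    field_simp
    ring
  · -- k ≥ 3
    have hk3 : (3:ℝ) ≤ (k:ℝ) := by exact_mod_cast h3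
    have h2k : ((2:ℝ) - k) ≠ 0 := by linarith
    set p : ℝ := ((2:ℝ) - k)/2 with hpdef
    set q : ℝ → ℝ := fun t => ⟪t • x - y, t • x - y⟫_ℝ with hqdef
    have hqnorm : ∀ t : ℝ, q t = ‖t • x - y‖ ^ 2 := fun t => real_inner_self_eq_norm_sq _
    have hqpos : ∀ t ∈ Set.uIcc (0:ℝ) 1, 0 < q t := by
      intro t ht
      rw [hqnorm]
      have := norm_pos_iff.mpr (hune t ht)
      positivity
    have hu : ∀ t : ℝ, HasDerivAt (fun s : ℝ => s • x - y) x t := by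
      intro t
      simpa using ((hasDerivAt_id t).smul_const x).sub_const y
    have hq : ∀ t : ℝ, HasDerivAt q (2 * ⟪x, t • x - y⟫_ℝ) t := by
      intro t
      have h := (hu t).inner ℝ (hu t)
      refine h.congr_deriv ?_
      rw [real_inner_comm (t • x - y) x]
      ring
    have hqnorm : ∀ t : ℝ, q t = ‖t • x - y‖ ^ 2 := fun t => real_inner_self_eq_norm_sq _
    have hF : ∀ t ∈ Set.uIcc (0:ℝ) 1,
        HasDerivAt (fun s => q s ^ p) (((2:ℝ) - k) * ((‖t • x - y‖ ^ k)⁻¹ * ⟪x, t • x - y⟫_ℝ)) t := by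
      intro t ht
      have h := (hq t).rpow_const (p := p) (Or.inl (ne_of_gt (hqpos t ht)))
      convert h using 1
      have hn : (0:ℝ) < ‖t • x - y‖ := norm_pos_iff.mpr (hune t ht)
      have key : q t ^ (p - 1) = (‖t • x - y‖ ^ k)⁻¹ := by
        rw [hqnorm, ← Real.rpow_natCast ‖t • x - y‖ 2, ← Real.rpow_mul hn.le]
        have h2p : ((2:ℕ):ℝ) * (p - 1) = -(k:ℝ) := by rw [hpdef]; push_cast; ring
        rw [h2p, Real.rpow_neg hn.le, Real.rpow_natCast]
      rw [key, hpdef]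
      ring
    have hintD : IntervalIntegrable
        (fun t : ℝ => ((2:ℝ) - k) * ((‖t • x - y‖ ^ k)⁻¹ * ⟪x, t • x - y⟫_ℝ))
        MeasureTheory.volume 0 1 := by
      apply ContinuousOn.intervalIntegrable
      exact continuousOn_const.mul ((((hcontu.norm.pow k).continuousOn).inv₀ hnz).mul
        (continuous_const.inner hcontu).continuousOn)
    have e1 : ((‖x - y‖ ^ 2 : ℝ)) ^ p = ‖x - y‖ ^ ((2:ℝ) - k) := by
      rw [← Real.rpow_natCast ‖x - y‖ 2, ← Real.rpow_mul hd.le]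
      congr 1
      rw [hpdef]; push_cast; ring
    have hI : (∫ t in (0:ℝ)..1, (‖t • x - y‖ ^ k)⁻¹ * ⟪x, t • x - y⟫_ℝ)
        = (‖x - y‖ ^ ((2:ℝ) - k) - 1) / ((2:ℝ) - k) := by
      have hFTC := intervalIntegral.integral_eq_sub_of_hasDerivAt hF hintD
      rw [intervalIntegral.integral_const_mul] at hFTC
      have hq0 : q 0 ^ p = 1 := by
        rw [hqnorm]
        simp [hy]
      have hq1 : q 1 ^ p = ‖x - y‖ ^ ((2:ℝ) - k) := by
        rw [hqnorm, one_smul]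
        exact e1
      rw [hq0, hq1] at hFTC
      rw [eq_div_iff h2k, mul_comm]
      exact hFTC
    have e2 : (‖x - y‖ ^ k)⁻¹ * (‖x - y‖ ^ 2) = ‖x - y‖ ^ ((2:ℝ) - k) := by
      rw [← Real.rpow_natCast ‖x - y‖ k, ← Real.rpow_natCast ‖x - y‖ 2,
        ← Real.rpow_neg hd.le, ← Real.rpow_add hd]
      congr 1
      push_cast; ring
    have h1c : 1 - c = ‖x - y‖ ^ 2 / 2 := by rw [hnsq]; ring
    rw [hWx, hI, h1c]
    have e3 : (‖x - y‖ ^ k)⁻¹ * (‖x - y‖ ^ 2 / 2) = ‖x - y‖ ^ ((2:ℝ) - k) / 2 := by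
      rw [← e2]; ring
    rw [e3]
    field_simp
    ring
end

section
/- Let k ≥ 2 be an integer, y ∈ ℝⁿ with |y| = 1. For x ≠ y in the closed unit ball, ∫₀¹ |tx−y|^{-(k-1)} dt ≤ ∫₀¹ (t|x−y|² + (1−t)²)^{-(k-1)/2} dt, and consequently |x−y|^{k-1} · |(1/2)x − ((k−2)/2) ∫₀¹ (tx−y)/|tx−y|^k dt| is bounded by (1/2)|x−y|^{k-1} + ((k−2)/2) ∫₀¹ (|x−y|²/(t|x−y|² + (1−t)²))^{(k-1)/2} dt. -/
open scoped InnerProductSpace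

theorem stmt_4 (n k : ℕ) (hk : 2 ≤ k) (y x : EuclideanSpace ℝ (Fin n)) (hy : ‖y‖ = 1)
    (hx : ‖x‖ ≤ 1) (hxy : x ≠ y) :
    (∫ t in (0:ℝ)..1, (‖t • x - y‖ ^ (k - 1))⁻¹)
      ≤ ∫ t in (0:ℝ)..1, (t * ‖x - y‖ ^ 2 + (1 - t) ^ 2) ^ (-(((k : ℝ) - 1)/2)) ∧
    ‖x - y‖ ^ (k - 1) *
        ‖(1/2 : ℝ) • x - (((k : ℝ) - 2)/2) •
          ∫ t in (0:ℝ)..1, (‖t • x - y‖ ^ k)⁻¹ • (t • x - y)‖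
      ≤ (1/2) * ‖x - y‖ ^ (k - 1) + (((k : ℝ) - 2)/2) *
        ∫ t in (0:ℝ)..1, (‖x - y‖ ^ 2 / (t * ‖x - y‖ ^ 2 + (1 - t) ^ 2)) ^ (((k : ℝ) - 1)/2) := by
  have hxy' : x - y ≠ 0 := sub_ne_zero.mpr hxy
  have hd0 : (0:ℝ) < ‖x - y‖ := norm_pos_iff.mpr hxy'
  set c : ℝ := ((k : ℝ) - 1)/2 with hc
  have hk2 : (2:ℝ) ≤ (k:ℝ) := by exact_mod_cast hk
  have hc0 : 0 ≤ c := by rw [hc]; linarith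
  have hkc : 2 * c = ((k:ℝ) - 1) := by rw [hc]; ring
  have hk1 : ((k - 1 : ℕ) : ℝ) = (k:ℝ) - 1 := by
    have h1 : 1 ≤ k := le_trans one_le_two hk
    push_cast [Nat.cast_sub h1]; ring
  -- positivity of g
  have gpos : ∀ t ∈ Set.Icc (0:ℝ) 1, 0 < t * ‖x - y‖ ^ 2 + (1 - t) ^ 2 := by
    intro t ht
    obtain ⟨ht0, ht1⟩ := ht
    rcases eq_or_lt_of_le ht0 with h | h
    · simp [← h]
    · have h1 : 0 < t * ‖x - y‖ ^ 2 := by positivity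
      nlinarith [sq_nonneg (1 - t)]
  -- key geometric inequality
  have key : ∀ t ∈ Set.Icc (0:ℝ) 1, t * ‖x - y‖ ^ 2 + (1 - t) ^ 2 ≤ ‖t • x - y‖ ^ 2 := by
    intro t ht
    obtain ⟨ht0, ht1⟩ := ht
    have e1 : ‖t • x - y‖ ^ 2 = ‖t • x‖ ^ 2 - 2 * ⟪t • x, y⟫_ℝ + ‖y‖ ^ 2 :=
      norm_sub_sq_real _ _
    have e2 : ‖x - y‖ ^ 2 = ‖x‖ ^ 2 - 2 * ⟪x, y⟫_ℝ + ‖y‖ ^ 2 := norm_sub_sq_real _ _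
    have e3 : ⟪t • x, y⟫_ℝ = t * ⟪x, y⟫_ℝ := real_inner_smul_left _ _ _
    have e4 : ‖t • x‖ = t * ‖x‖ := by
      rw [norm_smul, Real.norm_eq_abs, abs_of_nonneg ht0]
    have hx0 : (0:ℝ) ≤ ‖x‖ := norm_nonneg x
    rw [e1, e3, e4, hy, e2, hy]
    nlinarith [mul_nonneg (mul_nonneg ht0 (sub_nonneg.mpr ht1))
      (sub_nonneg.mpr (mul_le_one₀ hx hx0 hx))]
  have apos : ∀ t ∈ Set.Icc (0:ℝ) 1, 0 < ‖t • x - y‖ := by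
    intro t ht
    have h1 := lt_of_lt_of_le (gpos t ht) (key t ht)
    have h2 := norm_nonneg (t • x - y)
    nlinarith
  -- pointwise inequality
  have e1 : ∀ t ∈ Set.Icc (0:ℝ) 1,
      (‖t • x - y‖ ^ 2 : ℝ) ^ c = ‖t • x - y‖ ^ (k - 1) := by
    intro t ht
    have ha := apos t ht
    have h2 : (‖t • x - y‖ ^ 2 : ℝ) ^ c = ‖t • x - y‖ ^ (2 * c) := by
      rw [← Real.rpow_natCast ‖t • x - y‖ 2, ← Real.rpow_mul ha.le]
      norm_num
    rw [h2, hkc, ← hk1, Real.rpow_natCast]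
  have ptwise : ∀ t ∈ Set.Icc (0:ℝ) 1,
      (‖t • x - y‖ ^ (k - 1))⁻¹ ≤ (t * ‖x - y‖ ^ 2 + (1 - t) ^ 2) ^ (-c) := by
    intro t ht
    have hg := gpos t ht
    have e2 : (t * ‖x - y‖ ^ 2 + (1 - t) ^ 2) ^ c ≤ ‖t • x - y‖ ^ (k - 1) := by
      rw [← e1 t ht]
      exact Real.rpow_le_rpow hg.le (key t ht) hc0
    rw [Real.rpow_neg hg.le]
    exact inv_anti₀ (Real.rpow_pos_of_pos hg c) e2
  -- continuity / integrability
  have huIcc : Set.uIcc (0:ℝ) 1 = Set.Icc 0 1 := Set.uIcc_of_le zero_le_one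
  have hcont_v : ContinuousOn (fun t : ℝ => t • x - y) (Set.Icc (0:ℝ) 1) := by
    fun_prop
  have hcont_a : ContinuousOn (fun t : ℝ => ‖t • x - y‖) (Set.Icc (0:ℝ) 1) :=
    hcont_v.norm
  have hcont_g : ContinuousOn (fun t : ℝ => t * ‖x - y‖ ^ 2 + (1 - t) ^ 2)
      (Set.Icc (0:ℝ) 1) := by fun_prop
  have int1 : IntervalIntegrable (fun t : ℝ => (‖t • x - y‖ ^ (k - 1))⁻¹)
      MeasureTheory.volume 0 1 := by
    apply ContinuousOn.intervalIntegrable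
    rw [huIcc]
    exact (hcont_a.pow _).inv₀ (fun t ht => pow_ne_zero _ (apos t ht).ne')
  have int2 : IntervalIntegrable
      (fun t : ℝ => (t * ‖x - y‖ ^ 2 + (1 - t) ^ 2) ^ (-c))
      MeasureTheory.volume 0 1 := by
    apply ContinuousOn.intervalIntegrable
    rw [huIcc]
    exact hcont_g.rpow_const (fun t ht => Or.inl (gpos t ht).ne')
  have part1 : (∫ t in (0:ℝ)..1, (‖t • x - y‖ ^ (k - 1))⁻¹)
      ≤ ∫ t in (0:ℝ)..1, (t * ‖x - y‖ ^ 2 + (1 - t) ^ 2) ^ (-c) :=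
    intervalIntegral.integral_mono_on zero_le_one int1 int2 ptwise
  refine ⟨part1, ?_⟩
  -- part 2
  set I := ∫ t in (0:ℝ)..1, (‖t • x - y‖ ^ k)⁻¹ • (t • x - y) with hI
  have intV : IntervalIntegrable (fun t : ℝ => (‖t • x - y‖ ^ k)⁻¹ • (t • x - y))
      MeasureTheory.volume 0 1 := by
    apply ContinuousOn.intervalIntegrable
    rw [huIcc]
    exact ((hcont_a.pow _).inv₀ (fun t ht => pow_ne_zero _ (apos t ht).ne')).smul hcont_v
  have hnormI : ‖I‖ ≤ ∫ t in (0:ℝ)..1, (‖t • x - y‖ ^ (k - 1))⁻¹ := by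
    have h1 : ‖I‖ ≤ ∫ t in (0:ℝ)..1, ‖(‖t • x - y‖ ^ k)⁻¹ • (t • x - y)‖ := by
      rw [hI]
      exact intervalIntegral.norm_integral_le_integral_norm zero_le_one
    refine h1.trans_eq ?_
    apply intervalIntegral.integral_congr
    intro t ht
    rw [huIcc] at ht
    have ha := apos t ht
    show ‖(‖t • x - y‖ ^ k)⁻¹ • (t • x - y)‖ = (‖t • x - y‖ ^ (k - 1))⁻¹
    rw [norm_smul, norm_inv, norm_pow, norm_norm]
    have hkk : k = (k - 1) + 1 := (Nat.succ_pred_eq_of_pos (by omega)).symm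
    rw [hkk, pow_succ]
    field_simp
    ring_nf
    congr 1; omega
  have hc' : (0:ℝ) ≤ ((k:ℝ) - 2)/2 := by linarith
  have hdpow : (0:ℝ) < ‖x - y‖ ^ (k - 1) := pow_pos hd0 _
  have step1 : ‖x - y‖ ^ (k - 1) * ‖(1/2 : ℝ) • x - (((k : ℝ) - 2)/2) • I‖
      ≤ ‖x - y‖ ^ (k - 1) * (1/2 + (((k:ℝ) - 2)/2) * ‖I‖) := by
    apply mul_le_mul_of_nonneg_left _ hdpow.le
    calc ‖(1/2 : ℝ) • x - (((k : ℝ) - 2)/2) • I‖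
        ≤ ‖(1/2 : ℝ) • x‖ + ‖(((k : ℝ) - 2)/2) • I‖ := norm_sub_le _ _
      _ ≤ 1/2 + (((k:ℝ) - 2)/2) * ‖I‖ := by
          rw [norm_smul, norm_smul, Real.norm_eq_abs, Real.norm_eq_abs,
            abs_of_nonneg hc', abs_of_nonneg (by norm_num : (0:ℝ) ≤ 1/2)]
          have : (1/2 : ℝ) * ‖x‖ ≤ 1/2 * 1 := by
            apply mul_le_mul_of_nonneg_left hx; norm_num
          linarith
  -- rewrite final integral
  have eqint : ∫ t in (0:ℝ)..1,
      (‖x - y‖ ^ 2 / (t * ‖x - y‖ ^ 2 + (1 - t) ^ 2)) ^ c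
      = ‖x - y‖ ^ (k - 1) * ∫ t in (0:ℝ)..1, (t * ‖x - y‖ ^ 2 + (1 - t) ^ 2) ^ (-c) := by
    rw [← intervalIntegral.integral_const_mul]
    apply intervalIntegral.integral_congr
    intro t ht
    rw [huIcc] at ht
    have hg := gpos t ht
    have ed : (‖x - y‖ ^ 2 : ℝ) ^ c = ‖x - y‖ ^ (k - 1) := by
      have h2 : (‖x - y‖ ^ 2 : ℝ) ^ c = ‖x - y‖ ^ (2 * c) := by
        rw [← Real.rpow_natCast ‖x - y‖ 2, ← Real.rpow_mul hd0.le]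
        norm_num
      rw [h2, hkc, ← hk1, Real.rpow_natCast]
    show (‖x - y‖ ^ 2 / (t * ‖x - y‖ ^ 2 + (1 - t) ^ 2)) ^ c
        = ‖x - y‖ ^ (k - 1) * (t * ‖x - y‖ ^ 2 + (1 - t) ^ 2) ^ (-c)
    rw [Real.div_rpow (by positivity) hg.le, Real.rpow_neg hg.le, ed, div_eq_mul_inv]
  have step2 : ‖x - y‖ ^ (k - 1) * ‖I‖
      ≤ ∫ t in (0:ℝ)..1, (‖x - y‖ ^ 2 / (t * ‖x - y‖ ^ 2 + (1 - t) ^ 2)) ^ c := by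
    rw [eqint]
    exact mul_le_mul_of_nonneg_left (hnormI.trans part1) hdpow.le
  calc ‖x - y‖ ^ (k - 1) * ‖(1/2 : ℝ) • x - (((k : ℝ) - 2)/2) • I‖
      ≤ ‖x - y‖ ^ (k - 1) * (1/2 + (((k:ℝ) - 2)/2) * ‖I‖) := step1
    _ = 1/2 * ‖x - y‖ ^ (k - 1) + (((k:ℝ) - 2)/2) * (‖x - y‖ ^ (k - 1) * ‖I‖) := by ring
    _ ≤ 1/2 * ‖x - y‖ ^ (k - 1) + (((k:ℝ) - 2)/2) *
        ∫ t in (0:ℝ)..1, (‖x - y‖ ^ 2 / (t * ‖x - y‖ ^ 2 + (1 - t) ^ 2)) ^ c := by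
        exact add_le_add_right (mul_le_mul_of_nonneg_left step2 hc') _
end

section
/- Let k ≥ 2 be an integer and fix a unit vector y ∈ ℝⁿ. Then as x → y within the closed unit ball, |x−y|^{k-1} · (W(x) + (x−y)/|x−y|^k) → 0, where W(x) = (1/2)x − (x−y)/|x−y|^k − ((k−2)/2) ∫₀¹ (tx−y)/|tx−y|^k dt. -/
open scoped InnerProductSpace

private lemma integral_aux (r : ℝ) (h0 : 0 < r) (h1 : r < 1) :
    ∫ t in (0:ℝ)..1, (((1:ℝ) - (1-r)*t)^2)⁻¹ = r⁻¹ := by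
  have hc : (1 - r : ℝ) ≠ 0 := by linarith
  have h := intervalIntegral.integral_comp_sub_mul (fun u : ℝ => u ^ (-2 : ℤ)) hc 1
    (a := 0) (b := 1)
  simp only [zpow_neg, zpow_two] at h
  have hz : ∫ u in (1 - (1-r)*1)..(1 - (1-r)*0), (u * u)⁻¹ = r⁻¹ - 1 := by
    have h01 : (1 - (1-r)*1 : ℝ) = r := by ring
    have h00 : (1 - (1-r)*0 : ℝ) = 1 := by ring
    rw [h01, h00]
    have h2 := integral_zpow (a := r) (b := 1) (n := (-2 : ℤ))
      (Or.inr ⟨by norm_num, Set.notMem_uIcc_of_lt h0 one_pos⟩)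
    simp only [zpow_neg, zpow_two] at h2
    rw [h2]
    norm_num
    ring
  calc ∫ t in (0:ℝ)..1, (((1:ℝ) - (1-r)*t)^2)⁻¹
      = ∫ t in (0:ℝ)..1, (((1:ℝ) - (1-r)*t) * ((1:ℝ) - (1-r)*t))⁻¹ := by simp_rw [pow_two]
    _ = (1-r)⁻¹ • ∫ u in (1 - (1-r)*1)..(1 - (1-r)*0), (u * u)⁻¹ := h
    _ = r⁻¹ := by rw [hz, smul_eq_mul]; field_simp

private lemma lower_bound {E : Type*} [NormedAddCommGroup E] [InnerProductSpace ℝ E]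
    (x y : E) (hx : ‖x‖ ≤ 1) (hy : ‖y‖ = 1) {t : ℝ} (ht0 : 0 ≤ t) (ht1 : t ≤ 1) :
    1 - (1 - ‖x - y‖) * t ≤ 2 * ‖t • x - y‖ := by
  set r := ‖x - y‖ with hrdef
  have hp : ⟪x, y⟫_ℝ ≤ 1 := by
    have := real_inner_le_norm x y
    nlinarith [norm_nonneg x]
  have hr2 : r ^ 2 = ‖x‖ ^ 2 - 2 * ⟪x, y⟫_ℝ + 1 := by
    rw [hrdef, norm_sub_sq_real, hy]; ring
  have hm2 : ‖t • x - y‖ ^ 2 = t^2 * ‖x‖ ^ 2 - 2 * (t * ⟪x, y⟫_ℝ) + 1 := by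
    rw [norm_sub_sq_real, real_inner_smul_left, hy, norm_smul, Real.norm_eq_abs,
      abs_of_nonneg ht0, mul_pow]; ring
  have hrpos : 0 ≤ r := norm_nonneg _
  have hu : 0 < 1 - (1 - r) * t ∨ 1 - (1 - r) * t ≤ 0 := by
    rcases le_or_gt (1 - (1-r)*t) 0 with h | h
    · exact Or.inr h
    · exact Or.inl h
  rcases hu with hu | hu
  · have hsq : (1 - (1 - r) * t) ^ 2 ≤ (2 * ‖t • x - y‖) ^ 2 := by
      nlinarith [sq_nonneg (t * r - (1 - t)),
        mul_nonneg (mul_nonneg ht0 (by linarith : (0:ℝ) ≤ 1 - t)) (by linarith : (0:ℝ) ≤ 1 - ⟪x, y⟫_ℝ)]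
    exact le_of_pow_le_pow_left₀ two_ne_zero (by positivity) hsq
  · calc 1 - (1 - r) * t ≤ 0 := hu
      _ ≤ 2 * ‖t • x - y‖ := by positivity

private lemma integral_bound {E : Type*} [NormedAddCommGroup E] [InnerProductSpace ℝ E]
    (k : ℕ) (hk : 3 ≤ k) (x y : E) (hx : ‖x‖ ≤ 1) (hy : ‖y‖ = 1)
    (h0 : 0 < ‖x - y‖) (h1 : ‖x - y‖ < 1) :
    ‖∫ t in (0:ℝ)..1, (‖t • x - y‖ ^ k)⁻¹ • (t • x - y)‖
      ≤ 2 ^ k * (‖x - y‖ ^ (k - 3))⁻¹ * (‖x - y‖)⁻¹ := by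
  set r := ‖x - y‖ with hrdef
  set C : ℝ := 2 ^ k * (r ^ (k - 3))⁻¹ with hCdef
  have hCpos : 0 < C := by positivity
  -- pointwise bound on (0,1]
  have hptwise : ∀ t ∈ Set.Icc (0:ℝ) 1,
      ‖(‖t • x - y‖ ^ k)⁻¹ • (t • x - y)‖ ≤ C * (((1:ℝ) - (1-r)*t)^2)⁻¹ := by
    intro t ht
    obtain ⟨ht0, ht1⟩ := ht
    set u : ℝ := 1 - (1-r)*t with hudef
    have hru : r ≤ u := by nlinarith
    have hupos : 0 < u := lt_of_lt_of_le h0 hru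
    have hlow : u ≤ 2 * ‖t • x - y‖ := lower_bound x y hx hy ht0 ht1
    set m : ℝ := ‖t • x - y‖ with hmdef
    have hmpos : 0 < m := by nlinarith
    have hnorm : ‖(m ^ k)⁻¹ • (t • x - y)‖ = (m ^ (k-1))⁻¹ := by
      rw [norm_smul, Real.norm_eq_abs, abs_of_nonneg (by positivity), ← hmdef]
      have hsplit : m ^ k = m ^ (k-1) * m := by
        rw [← pow_succ]; congr 1; omega
      rw [hsplit, mul_inv, mul_assoc, inv_mul_cancel₀ hmpos.ne']
      ring
    rw [hnorm]
    have hmain : r ^ (k-3) * u ^ 2 ≤ 2 ^ k * m ^ (k-1) := by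
      have e1 : r ^ (k-3) * u ^ 2 ≤ u ^ (k-3) * u ^ 2 := by
        have := pow_le_pow_left₀ h0.le hru (k-3)
        nlinarith [sq_nonneg u]
      have e2 : u ^ (k-3) * u ^ 2 = u ^ (k-1) := by
        rw [← pow_add]; congr 1; omega
      have e3 : u ^ (k-1) ≤ (2*m) ^ (k-1) := pow_le_pow_left₀ hupos.le hlow (k-1)
      have e4 : (2*m : ℝ) ^ (k-1) = 2 ^ (k-1) * m ^ (k-1) := by rw [mul_pow]
      have e5 : (2:ℝ) ^ (k-1) * m ^ (k-1) ≤ 2 ^ k * m ^ (k-1) := by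
        have : (2:ℝ) ^ (k-1) ≤ 2 ^ k := pow_le_pow_right₀ one_le_two (by omega)
        nlinarith [pow_pos hmpos (k-1)]
      calc r ^ (k-3) * u ^ 2 ≤ u ^ (k-3) * u ^ 2 := e1
        _ = u ^ (k-1) := e2
        _ ≤ (2*m) ^ (k-1) := e3
        _ = 2 ^ (k-1) * m ^ (k-1) := e4
        _ ≤ 2 ^ k * m ^ (k-1) := e5
    have hstep : (m ^ (k-1))⁻¹ ≤ 2 ^ k / (r ^ (k-3) * u ^ 2) := by
      rw [inv_eq_one_div, div_le_div_iff₀ (by positivity) (by positivity)]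
      nlinarith
    calc (m ^ (k-1))⁻¹ ≤ 2 ^ k / (r ^ (k-3) * u ^ 2) := hstep
      _ = C * (u ^ 2)⁻¹ := by rw [hCdef]; field_simp
  -- integrability of the bound
  have hint : IntervalIntegrable (fun t => C * (((1:ℝ) - (1-r)*t)^2)⁻¹)
      MeasureTheory.volume 0 1 := by
    apply ContinuousOn.intervalIntegrable
    apply ContinuousOn.mul continuousOn_const
    apply ContinuousOn.inv₀
    · exact ((continuous_const.sub (continuous_const.mul continuous_id)).pow 2).continuousOn
    · intro t ht
      rw [Set.uIcc_of_le (by norm_num : (0:ℝ) ≤ 1)] at ht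
      have hru : r ≤ 1 - (1-r)*t := by nlinarith [ht.1, ht.2]
      have hpos : 0 < 1 - (1-r)*t := lt_of_lt_of_le h0 hru
      positivity
  have hbound := intervalIntegral.norm_integral_le_abs_of_norm_le
    (f := fun t => (‖t • x - y‖ ^ k)⁻¹ • (t • x - y))
    (μ := MeasureTheory.volume) (a := 0) (b := 1)
    (g := fun t => C * (((1:ℝ) - (1-r)*t)^2)⁻¹) ?_ hint
  · have hval : ∫ t in (0:ℝ)..1, C * (((1:ℝ) - (1-r)*t)^2)⁻¹ = C * r⁻¹ := by
      rw [intervalIntegral.integral_const_mul, integral_aux r h0 h1]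
    rw [hval, abs_of_nonneg (by positivity)] at hbound
    calc ‖∫ t in (0:ℝ)..1, (‖t • x - y‖ ^ k)⁻¹ • (t • x - y)‖ ≤ C * r⁻¹ := hbound
      _ = 2 ^ k * (r ^ (k-3))⁻¹ * r⁻¹ := by rw [hCdef]
  · have hsub := MeasureTheory.ae_restrict_mem (μ := MeasureTheory.volume)
      (measurableSet_Ioc (a := (0:ℝ)) (b := 1))
    rw [← Set.uIoc_of_le (by norm_num : (0:ℝ) ≤ 1)] at hsub
    filter_upwards [hsub] with t ht
    rw [Set.uIoc_of_le (by norm_num : (0:ℝ) ≤ 1)] at ht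
    exact hptwise t ⟨ht.1.le, ht.2⟩

theorem stmt_5 (n k : ℕ) (hk : 2 ≤ k) (y : EuclideanSpace ℝ (Fin n)) (hy : ‖y‖ = 1)
    (W : EuclideanSpace ℝ (Fin n) → EuclideanSpace ℝ (Fin n))
    (hW : ∀ z, W z = (1/2 : ℝ) • z - (‖z - y‖ ^ k)⁻¹ • (z - y)
      - (((k : ℝ) - 2)/2) • ∫ t in (0:ℝ)..1, (‖t • z - y‖ ^ k)⁻¹ • (t • z - y)) :
    ∀ ε > 0, ∃ δ > 0, ∀ x : EuclideanSpace ℝ (Fin n), ‖x‖ ≤ 1 →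
      0 < ‖x - y‖ → ‖x - y‖ < δ →
      ‖x - y‖ ^ (k - 1) * ‖W x + (‖x - y‖ ^ k)⁻¹ • (x - y)‖ < ε := by
  intro ε hε
  have hKpos : (0:ℝ) < 1 + k * 2 ^ k := by positivity
  refine ⟨min 1 (ε / (1 + k * 2 ^ k)), lt_min one_pos (by positivity), ?_⟩
  intro x hx h0 hδ
  set r := ‖x - y‖ with hrdef
  have h1 : r < 1 := lt_of_lt_of_le hδ (min_le_left _ _)
  have hε' : r < ε / (1 + k * 2 ^ k) := lt_of_lt_of_le hδ (min_le_right _ _)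
  set I := ∫ t in (0:ℝ)..1, (‖t • x - y‖ ^ k)⁻¹ • (t • x - y) with hIdef
  have hck : (0:ℝ) ≤ ((k:ℝ) - 2)/2 := by
    have : (2:ℝ) ≤ (k:ℝ) := by exact_mod_cast hk
    linarith
  have key : ‖W x + (‖x - y‖ ^ k)⁻¹ • (x - y)‖ ≤ (1/2) * ‖x‖ + (((k:ℝ) - 2)/2) * ‖I‖ := by
    rw [hW x]
    have e : (1/2 : ℝ) • x - (‖x - y‖ ^ k)⁻¹ • (x - y) - (((k : ℝ) - 2)/2) • I
        + (‖x - y‖ ^ k)⁻¹ • (x - y) = (1/2 : ℝ) • x - (((k : ℝ) - 2)/2) • I := by abel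
    rw [e]
    calc ‖(1/2 : ℝ) • x - (((k : ℝ) - 2)/2) • I‖
        ≤ ‖(1/2 : ℝ) • x‖ + ‖(((k : ℝ) - 2)/2) • I‖ := norm_sub_le _ _
      _ = (1/2) * ‖x‖ + (((k:ℝ) - 2)/2) * ‖I‖ := by
          rw [norm_smul, norm_smul, Real.norm_eq_abs, Real.norm_eq_abs,
            abs_of_nonneg hck]
          norm_num
  have hrk1 : r ^ (k-1) ≤ r := by
    calc r ^ (k-1) ≤ r ^ 1 := pow_le_pow_of_le_one h0.le h1.le (by omega)
      _ = r := pow_one r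
  have bound1 : r ^ (k-1) * ((1/2) * ‖x‖) ≤ r / 2 := by
    have h' : r ^ (k-1) * ‖x‖ ≤ r := by
      calc r ^ (k-1) * ‖x‖ ≤ r ^ (k-1) * 1 := by
            exact mul_le_mul_of_nonneg_left hx (by positivity)
        _ = r ^ (k-1) := mul_one _
        _ ≤ r := hrk1
    linarith
  have bound2 : r ^ (k-1) * ((((k:ℝ) - 2)/2) * ‖I‖) ≤ (k * 2 ^ k) * r := by
    rcases eq_or_lt_of_le hk with hk2 | hk3
    · have : ((k:ℝ) - 2)/2 = 0 := by rw [← hk2]; norm_num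
      rw [this, zero_mul, mul_zero]
      positivity
    · have hk3' : 3 ≤ k := hk3
      have hI := integral_bound k hk3' x y hx hy h0 h1
      rw [← hIdef, ← hrdef] at hI
      have hid : r ^ (k-1) * (2 ^ k * (r ^ (k-3))⁻¹ * r⁻¹) = 2 ^ k * r := by
        have hsplit : r ^ (k-1) = r ^ (k-3) * r * r := by
          rw [← pow_succ, ← pow_succ]
          congr 1; omega
        rw [hsplit]
        field_simp
      have step : r ^ (k-1) * ‖I‖ ≤ 2 ^ k * r := by
        calc r ^ (k-1) * ‖I‖ ≤ r ^ (k-1) * (2 ^ k * (r ^ (k-3))⁻¹ * r⁻¹) :=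
              mul_le_mul_of_nonneg_left hI (by positivity)
          _ = 2 ^ k * r := hid
      have hkk : ((k:ℝ) - 2)/2 ≤ (k:ℝ) := by
        have : (2:ℝ) ≤ (k:ℝ) := by exact_mod_cast hk
        linarith
      calc r ^ (k-1) * ((((k:ℝ) - 2)/2) * ‖I‖)
          = (((k:ℝ) - 2)/2) * (r ^ (k-1) * ‖I‖) := by ring
        _ ≤ (((k:ℝ) - 2)/2) * (2 ^ k * r) := by
            exact mul_le_mul_of_nonneg_left step hck
        _ ≤ (k:ℝ) * (2 ^ k * r) := by
            apply mul_le_mul_of_nonneg_right hkk (by positivity)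
        _ = (k * 2 ^ k) * r := by ring
  have total : r ^ (k-1) * ‖W x + (‖x - y‖ ^ k)⁻¹ • (x - y)‖
      ≤ (1 + k * 2 ^ k) * r := by
    calc r ^ (k-1) * ‖W x + (‖x - y‖ ^ k)⁻¹ • (x - y)‖
        ≤ r ^ (k-1) * ((1/2) * ‖x‖ + (((k:ℝ) - 2)/2) * ‖I‖) :=
          mul_le_mul_of_nonneg_left key (by positivity)
      _ = r ^ (k-1) * ((1/2) * ‖x‖) + r ^ (k-1) * ((((k:ℝ) - 2)/2) * ‖I‖) := by ring
      _ ≤ r / 2 + (k * 2 ^ k) * r := add_le_add bound1 bound2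
      _ ≤ (1 + k * 2 ^ k) * r := by nlinarith [h0.le]
  have final : (1 + (k:ℝ) * 2 ^ k) * r < ε := by
    rw [div_eq_inv_mul] at hε'
    calc (1 + (k:ℝ) * 2 ^ k) * r < (1 + (k:ℝ) * 2 ^ k) * ((1 + (k:ℝ) * 2 ^ k)⁻¹ * ε) := by
          exact mul_lt_mul_of_pos_left hε' hKpos
      _ = ε := by field_simp
  exact lt_of_le_of_lt total final
end

section
/- Let k ≥ 2, y a unit vector in ℝⁿ, x in the closed unit ball with x ≠ y, and e₁,…,e_k an orthonormal frame in ℝⁿ. Then Σᵢ ⟨D_{eᵢ} W(x), eᵢ⟩ = k/2 − (k/|x−y|^{k+2})(|x−y|² − Σᵢ⟨x−y, eᵢ⟩²) − ((k−2)/2)∫₀¹ (tk/|tx−y|^{k+2})(|tx−y|² − Σᵢ⟨tx−y, eᵢ⟩²) dt, where W(x) = (1/2)x − (x−y)/|x−y|^k − ((k−2)/2)∫₀¹ (tx−y)/|tx−y|^k dt. -/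
open scoped InnerProductSpace

section Helpers
set_option linter.unusedSectionVars false


variable {E : Type*} [NormedAddCommGroup E] [InnerProductSpace ℝ E]

noncomputable def Gmap (k : ℕ) (w : E) : E →L[ℝ] E :=
  (‖w‖ ^ k)⁻¹ • ContinuousLinearMap.id ℝ E
    - ((k : ℝ) / ‖w‖ ^ (k + 2)) • ((innerSL ℝ w).smulRight w)

lemma rpow_eq_inv_pow (k : ℕ) (w : E) :
    (‖w‖ ^ 2) ^ (-(k : ℝ)/2 : ℝ) = (‖w‖ ^ k)⁻¹ := by
  rw [← Real.rpow_natCast ‖w‖ 2, ← Real.rpow_mul (norm_nonneg w),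
    ← Real.rpow_natCast ‖w‖ k, ← Real.rpow_neg (norm_nonneg w)]
  congr 1
  ring

lemma hasFDerivAt_core (k : ℕ) (y z : E) (hzy : z ≠ y) :
    HasFDerivAt (fun z => (‖z - y‖ ^ k)⁻¹ • (z - y)) (Gmap k (z - y)) z := by
  set w := z - y with hw
  have hw0 : w ≠ 0 := sub_ne_zero.2 hzy
  have hnw : (0:ℝ) < ‖w‖ := norm_pos_iff.2 hw0
  have hsq : (‖w‖ ^ 2 : ℝ) ≠ 0 := by positivity
  have h1 : HasFDerivAt (fun z : E => ‖z - y‖ ^ 2)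
      ((2:ℝ) • (innerSL ℝ w)) z := by
    have h := ((hasFDerivAt_id z).sub_const y).norm_sq
    convert h using 1
    · rfl
    ext v
    simp [hw, inner_sub_left, two_smul]
  set q : ℝ := -(k : ℝ)/2 with hq
  have h2 : HasDerivAt (fun s : ℝ => s ^ q) (q * (‖w‖ ^ 2) ^ (q - 1)) (‖w‖ ^ 2) :=
    Real.hasDerivAt_rpow_const (Or.inl hsq)
  have h3 : HasFDerivAt (fun z : E => (‖z - y‖ ^ 2) ^ q)
      ((q * (‖w‖ ^ 2) ^ (q - 1)) • ((2:ℝ) • (innerSL ℝ w))) z :=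
    h2.comp_hasFDerivAt (f := fun z : E => ‖z - y‖ ^ 2) z h1
  have h4 : HasFDerivAt (fun z : E => (‖z - y‖ ^ k)⁻¹)
      ((q * (‖w‖ ^ 2) ^ (q - 1)) • ((2:ℝ) • (innerSL ℝ w))) z := by
    refine h3.congr_of_eventuallyEq (Filter.Eventually.of_forall fun z' => ?_)
    exact (rpow_eq_inv_pow k (z' - y)).symm
  have h5 := h4.smul ((hasFDerivAt_id z).sub_const y)
  convert h5 using 1
  · rfl
  have hpow : ((‖w‖:ℝ) ^ 2) ^ (q - 1) = (‖w‖ ^ (k + 2))⁻¹ := by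
    rw [← Real.rpow_natCast ‖w‖ 2, ← Real.rpow_mul (norm_nonneg w),
      ← Real.rpow_natCast ‖w‖ (k+2), ← Real.rpow_neg (norm_nonneg w)]
    congr 1
    push_cast [hq]
    ring
  ext v
  simp only [Gmap, ContinuousLinearMap.coe_sub', Pi.sub_apply, ContinuousLinearMap.add_apply,
    ContinuousLinearMap.smul_apply, ContinuousLinearMap.coe_id', id_eq,
    ContinuousLinearMap.smulRight_apply, ContinuousLinearMap.coe_smul', Pi.smul_apply,
    innerSL_apply_apply, smul_eq_mul]
  rw [sub_eq_add_neg]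
  congr 1
  rw [smul_smul, ← neg_smul]
  congr 1
  rw [hpow, hq]
  field_simp

lemma trace_Gmap (k : ℕ) (w : E) (hw : w ≠ 0) (e : Fin k → E) (he : Orthonormal ℝ e) :
    ∑ i, ⟪Gmap k w (e i), e i⟫_ℝ
      = ((k:ℝ) / ‖w‖ ^ (k+2)) * (‖w‖^2 - ∑ i, ⟪w, e i⟫_ℝ ^ 2) := by
  have hnw : (0:ℝ) < ‖w‖ := norm_pos_iff.2 hw
  have hee : ∀ i, ⟪e i, e i⟫_ℝ = (1:ℝ) := fun i => by
    rw [real_inner_self_eq_norm_sq, he.1 i, one_pow]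
  have hterm : ∀ i, ⟪Gmap k w (e i), e i⟫_ℝ
      = (‖w‖^k)⁻¹ - ((k:ℝ)/‖w‖^(k+2)) * ⟪w, e i⟫_ℝ^2 := by
    intro i
    simp only [Gmap, ContinuousLinearMap.coe_sub', Pi.sub_apply,
      ContinuousLinearMap.smul_apply, ContinuousLinearMap.coe_id', id_eq,
      ContinuousLinearMap.smulRight_apply, innerSL_apply_apply, ContinuousLinearMap.coe_smul',
      Pi.smul_apply, inner_sub_left, real_inner_smul_left, hee i]
    ring
  rw [Finset.sum_congr rfl (fun i _ => hterm i), Finset.sum_sub_distrib,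
    Finset.sum_const, ← Finset.mul_sum]
  simp only [Finset.card_univ, Fintype.card_fin, nsmul_eq_mul]
  have hpow : ‖w‖ ^ (k+2) = ‖w‖^k * ‖w‖^2 := by ring
  field_simp
  ring

lemma norm_Gmap_le (k : ℕ) (w : E) (hw : w ≠ 0) :
    ‖Gmap k w‖ ≤ ((k:ℝ)+1) * (‖w‖^k)⁻¹ := by
  have hnw : (0:ℝ) < ‖w‖ := norm_pos_iff.2 hw
  refine ContinuousLinearMap.opNorm_le_bound _ (by positivity) fun v => ?_
  have hGv : Gmap k w v = (‖w‖^k)⁻¹ • v - ((k:ℝ)/‖w‖^(k+2)) • (⟪w, v⟫_ℝ • w) := by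
    simp [Gmap]
  rw [hGv]
  have h1 : ‖(‖w‖^k)⁻¹ • v‖ = (‖w‖^k)⁻¹ * ‖v‖ := by
    rw [norm_smul, Real.norm_eq_abs, abs_of_pos (by positivity)]
  have h2 : ‖((k:ℝ)/‖w‖^(k+2)) • (⟪w, v⟫_ℝ • w)‖ ≤ ((k:ℝ)/‖w‖^(k+2)) * (‖w‖ * ‖v‖ * ‖w‖) := by
    rw [norm_smul, norm_smul, Real.norm_eq_abs, Real.norm_eq_abs,
      abs_of_nonneg (by positivity : (0:ℝ) ≤ (k:ℝ)/‖w‖^(k+2))]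
    have h := abs_real_inner_le_norm w v
    have hk : (0:ℝ) ≤ (k:ℝ)/‖w‖^(k+2) := by positivity
    have h' : |⟪w, v⟫_ℝ| * ‖w‖ ≤ ‖w‖ * ‖v‖ * ‖w‖ :=
      mul_le_mul_of_nonneg_right h (norm_nonneg w)
    exact mul_le_mul_of_nonneg_left h' hk
  have h3 : ((k:ℝ)/‖w‖^(k+2)) * (‖w‖ * ‖v‖ * ‖w‖) = (k:ℝ) * (‖w‖^k)⁻¹ * ‖v‖ := by
    field_simp
    ring
  calc ‖(‖w‖^k)⁻¹ • v - ((k:ℝ)/‖w‖^(k+2)) • (⟪w, v⟫_ℝ • w)‖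
      ≤ ‖(‖w‖^k)⁻¹ • v‖ + ‖((k:ℝ)/‖w‖^(k+2)) • (⟪w, v⟫_ℝ • w)‖ := norm_sub_le _ _
    _ ≤ (‖w‖^k)⁻¹ * ‖v‖ + (k:ℝ) * (‖w‖^k)⁻¹ * ‖v‖ := by rw [h1]; linarith [h3 ▸ h2]
    _ = ((k:ℝ)+1) * (‖w‖^k)⁻¹ * ‖v‖ := by ring

lemma continuous_Gsmul (k : ℕ) : Continuous fun w : E => (innerSL ℝ w).smulRight w := by
  exact (((ContinuousLinearMap.smulRightL ℝ E E).continuous.comp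
    (innerSL ℝ).continuous).clm_apply continuous_id)

lemma continuousOn_Gmap (k : ℕ) :
    ContinuousOn (fun w : E => Gmap k w) {w : E | w ≠ 0} := by
  have hnorm : ∀ w : E, w ∈ {w : E | w ≠ 0} → (‖w‖:ℝ) ≠ 0 := fun w hw =>
    norm_ne_zero_iff.2 hw
  have h1 : ContinuousOn (fun w : E => (‖w‖ ^ k)⁻¹) {w : E | w ≠ 0} :=
    ((continuous_norm.pow k).continuousOn).inv₀ (fun w hw => pow_ne_zero _ (hnorm w hw))
  have h2 : ContinuousOn (fun w : E => (k : ℝ) / ‖w‖ ^ (k+2)) {w : E | w ≠ 0} := by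
    simp only [div_eq_mul_inv]
    exact continuousOn_const.mul
      (((continuous_norm.pow (k+2)).continuousOn).inv₀ (fun w hw => pow_ne_zero _ (hnorm w hw)))
  exact (h1.smul continuousOn_const).sub (h2.smul (continuous_Gsmul k).continuousOn)

end Helpers

set_option maxHeartbeats 1000000 in
theorem stmt_16 (n k : ℕ) (hk : 2 ≤ k) (y x : EuclideanSpace ℝ (Fin n)) (hy : ‖y‖ = 1)
    (hx : ‖x‖ ≤ 1) (hxy : x ≠ y) (e : Fin k → EuclideanSpace ℝ (Fin n))
    (he : Orthonormal ℝ e)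
    (W : EuclideanSpace ℝ (Fin n) → EuclideanSpace ℝ (Fin n))
    (hW : ∀ z, W z = (1/2 : ℝ) • z - (‖z - y‖ ^ k)⁻¹ • (z - y)
      - (((k : ℝ) - 2)/2) • ∫ t in (0:ℝ)..1, (‖t • z - y‖ ^ k)⁻¹ • (t • z - y)) :
    ∃ W' : EuclideanSpace ℝ (Fin n) →L[ℝ] EuclideanSpace ℝ (Fin n),
      HasFDerivAt W W' x ∧
      (∑ i, ⟪W' (e i), e i⟫_ℝ)
        = (k : ℝ)/2
          - ((k : ℝ) / ‖x - y‖ ^ (k + 2)) * (‖x - y‖ ^ 2 - ∑ i, ⟪x - y, e i⟫_ℝ ^ 2)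
          - (((k : ℝ) - 2)/2) *
            ∫ t in (0:ℝ)..1, (t * (k : ℝ) / ‖t • x - y‖ ^ (k + 2)) *
              (‖t • x - y‖ ^ 2 - ∑ i, ⟪t • x - y, e i⟫_ℝ ^ 2) := by
  -- t • x ≠ y on [0,1]
  have hne : ∀ t ∈ Set.Icc (0:ℝ) 1, t • x ≠ y := by
    intro t ht h
    have h1 : ‖t • x‖ = 1 := by rw [h, hy]
    rw [norm_smul, Real.norm_eq_abs, abs_of_nonneg ht.1] at h1
    have h2 : t * ‖x‖ ≤ t := by nlinarith [mul_le_mul_of_nonneg_left hx ht.1]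
    have ht1 : t = 1 := le_antisymm ht.2 (by linarith)
    rw [ht1, one_smul] at h
    exact hxy h
  -- minimum of ‖t•x - y‖ on [0,1]
  obtain ⟨t₀, ht₀, hmin⟩ := (isCompact_Icc (a := (0:ℝ)) (b := 1)).exists_isMinOn
    (Set.nonempty_Icc.2 zero_le_one)
    (Continuous.continuousOn (by fun_prop : Continuous fun t : ℝ => ‖t • x - y‖))
  set m := ‖t₀ • x - y‖ with hm
  have hm0 : 0 < m := norm_pos_iff.2 (sub_ne_zero.2 (hne t₀ ht₀))
  -- lower bound on ball
  have hlow : ∀ t ∈ Set.Icc (0:ℝ) 1, ∀ x' ∈ Metric.ball x (m/2), m/2 ≤ ‖t • x' - y‖ := by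
    intro t ht x' hx'
    have tri := dist_triangle (t • x) (t • x') y
    rw [dist_eq_norm, dist_eq_norm, dist_eq_norm] at tri
    have h2 : ‖t • x - t • x'‖ ≤ ‖x - x'‖ := by
      rw [← smul_sub, norm_smul, Real.norm_eq_abs, abs_of_nonneg ht.1]
      nlinarith [norm_nonneg (x - x'), ht.2, ht.1]
    have h3 : ‖x - x'‖ < m/2 := by
      rw [← dist_eq_norm, dist_comm]; exact hx'
    have h4 : m ≤ ‖t • x - y‖ := hmin ht
    linarith
  have hne' : ∀ t ∈ Set.Icc (0:ℝ) 1, ∀ x' ∈ Metric.ball x (m/2), t • x' - y ≠ 0 := by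
    intro t ht x' hx'
    have := hlow t ht x' hx'
    intro h
    rw [h, norm_zero] at this
    linarith
  -- continuity of derivative integrand
  have hGcont : ∀ x' ∈ Metric.ball x (m/2),
      ContinuousOn (fun t : ℝ => t • Gmap k (t • x' - y)) (Set.Icc (0:ℝ) 1) := by
    intro x' hx'
    refine continuousOn_id.smul ?_
    refine (continuousOn_Gmap k).comp ?_ ?_
    · exact ((continuous_id.smul continuous_const).sub continuous_const).continuousOn
    · intro t ht
      exact hne' t ht x' hx'
  -- continuity of the integrand itself
  have hFcont : ∀ x' ∈ Metric.ball x (m/2),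
      ContinuousOn (fun t : ℝ => (‖t • x' - y‖ ^ k)⁻¹ • (t • x' - y)) (Set.Icc (0:ℝ) 1) := by
    intro x' hx'
    have hsub : Continuous fun t : ℝ => t • x' - y :=
      (continuous_id.smul continuous_const).sub continuous_const
    refine ContinuousOn.smul (f := fun t : ℝ => (‖t • x' - y‖ ^ k)⁻¹) ?_ hsub.continuousOn
    refine ContinuousOn.inv₀ ((hsub.norm.pow k).continuousOn) ?_
    intro t ht
    exact pow_ne_zero _ (norm_ne_zero_iff.2 (hne' t ht x' hx'))
  have hxball : x ∈ Metric.ball x (m/2) := Metric.mem_ball_self (by linarith)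
  have hIoc_sub : Set.uIoc (0:ℝ) 1 ⊆ Set.Icc 0 1 := by
    rw [Set.uIoc_of_le zero_le_one]; exact Set.Ioc_subset_Icc_self
  have huIcc : Set.uIcc (0:ℝ) 1 = Set.Icc 0 1 := Set.uIcc_of_le zero_le_one
  -- interval integrability of the derivative integrand at x
  have hIntG : IntervalIntegrable (fun t : ℝ => t • Gmap k (t • x - y))
      MeasureTheory.volume 0 1 := by
    apply ContinuousOn.intervalIntegrable
    rw [huIcc]; exact hGcont x hxball
  -- apply differentiation under the integral sign
  have hI : HasFDerivAt
      (fun x' : EuclideanSpace ℝ (Fin n) =>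
        ∫ t in (0:ℝ)..1, (‖t • x' - y‖ ^ k)⁻¹ • (t • x' - y))
      (∫ t in (0:ℝ)..1, t • Gmap k (t • x - y)) x := by
    refine intervalIntegral.hasFDerivAt_integral_of_dominated_of_fderiv_le
      (F := fun x' t => (‖t • x' - y‖ ^ k)⁻¹ • (t • x' - y))
      (F' := fun x' t => t • Gmap k (t • x' - y))
      (bound := fun _ => ((k:ℝ)+1) * ((m/2)^k)⁻¹)
      (s := Metric.ball x (m/2)) (Metric.ball_mem_nhds x (by linarith)) ?_ ?_ ?_ ?_ ?_ ?_
    · filter_upwards [Metric.ball_mem_nhds x (by linarith : (0:ℝ) < m/2)] with x' hx'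
      exact ((hFcont x' hx').mono hIoc_sub).aestronglyMeasurable measurableSet_uIoc
    · apply ContinuousOn.intervalIntegrable
      rw [huIcc]; exact hFcont x hxball
    · exact ((hGcont x hxball).mono hIoc_sub).aestronglyMeasurable measurableSet_uIoc
    · refine Filter.Eventually.of_forall fun t => fun ht x' hx' => ?_
      have htIcc : t ∈ Set.Icc (0:ℝ) 1 := hIoc_sub ht
      have hw := hne' t htIcc x' hx'
      have hlow' := hlow t htIcc x' hx'
      have h1 : ‖t • Gmap k (t • x' - y)‖ ≤ ‖Gmap k (t • x' - y)‖ := by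
        have hns := norm_smul t (Gmap k (t • x' - y))
        rw [hns, Real.norm_eq_abs, abs_of_nonneg htIcc.1]
        nlinarith [norm_nonneg (Gmap k (t • x' - y)), htIcc.2, htIcc.1]
      have h2 := norm_Gmap_le k (t • x' - y) hw
      have h3 : (‖t • x' - y‖^k)⁻¹ ≤ ((m/2)^k)⁻¹ := by
        apply inv_anti₀ (by positivity)
        exact pow_le_pow_left₀ (by linarith) hlow' k
      have h4 : ((k:ℝ)+1) * (‖t • x' - y‖^k)⁻¹ ≤ ((k:ℝ)+1) * ((m/2)^k)⁻¹ := by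
        apply mul_le_mul_of_nonneg_left h3 (by positivity)
      linarith
    · exact intervalIntegrable_const
    · refine Filter.Eventually.of_forall fun t => fun ht x' hx' => ?_
      have htIcc : t ∈ Set.Icc (0:ℝ) 1 := hIoc_sub ht
      have hty : t • x' ≠ y := by
        intro h; exact hne' t htIcc x' hx' (by rw [h, sub_self])
      have hsmul : HasFDerivAt (fun u : EuclideanSpace ℝ (Fin n) => t • u)
          (t • ContinuousLinearMap.id ℝ (EuclideanSpace ℝ (Fin n))) x' := by
        exact (hasFDerivAt_id x').const_smul t
      have hcomp := (hasFDerivAt_core k y (t • x') hty).comp x' hsmul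
      have heq : (Gmap k (t • x' - y)).comp
          (t • ContinuousLinearMap.id ℝ (EuclideanSpace ℝ (Fin n)))
          = t • Gmap k (t • x' - y) := by
        ext v
        simp [map_smul]
      rw [heq] at hcomp
      exact hcomp
  set c : ℝ := ((k:ℝ)-2)/2 with hc
  set I : EuclideanSpace ℝ (Fin n) →L[ℝ] EuclideanSpace ℝ (Fin n) :=
    ∫ t in (0:ℝ)..1, t • Gmap k (t • x - y) with hIdef
  refine ⟨((1:ℝ)/2) • ContinuousLinearMap.id ℝ (EuclideanSpace ℝ (Fin n)) - Gmap k (x - y)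
    - c • I, ?_, ?_⟩
  · have hWfun : W = fun z => (1/2 : ℝ) • z - (‖z - y‖ ^ k)⁻¹ • (z - y)
        - c • ∫ t in (0:ℝ)..1, (‖t • z - y‖ ^ k)⁻¹ • (t • z - y) := funext hW
    rw [hWfun]
    exact (((hasFDerivAt_id x).const_smul ((1:ℝ)/2)).sub (hasFDerivAt_core k y x hxy)).sub
      (hI.const_smul c)
  · have hw0 : x - y ≠ 0 := sub_ne_zero.2 hxy
    have hee : ∀ i, ⟪e i, e i⟫_ℝ = (1:ℝ) := fun i => by
      rw [real_inner_self_eq_norm_sq, he.1 i, one_pow]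
    have hIntGi : ∀ i, IntervalIntegrable (fun t : ℝ => (t • Gmap k (t • x - y)) (e i))
        MeasureTheory.volume 0 1 := by
      intro i
      apply ContinuousOn.intervalIntegrable
      rw [huIcc]
      exact (ContinuousLinearMap.apply ℝ _ (e i)).continuous.comp_continuousOn (hGcont x hxball)
    have hinner : ∀ i, ⟪I (e i), e i⟫_ℝ
        = ∫ t in (0:ℝ)..1, ⟪(t • Gmap k (t • x - y)) (e i), e i⟫_ℝ := by
      intro i
      rw [hIdef, ContinuousLinearMap.intervalIntegral_apply hIntG (e i)]
      calc ⟪∫ t in (0:ℝ)..1, (t • Gmap k (t • x - y)) (e i), e i⟫_ℝ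
          = (innerSL ℝ (e i)) (∫ t in (0:ℝ)..1, (t • Gmap k (t • x - y)) (e i)) :=
            real_inner_comm _ _
        _ = ∫ t in (0:ℝ)..1, (innerSL ℝ (e i)) ((t • Gmap k (t • x - y)) (e i)) :=
            ((innerSL ℝ (e i)).intervalIntegral_comp_comm (hIntGi i)).symm
        _ = ∫ t in (0:ℝ)..1, ⟪(t • Gmap k (t • x - y)) (e i), e i⟫_ℝ := by
            refine intervalIntegral.integral_congr fun t _ => ?_
            rw [innerSL_apply_apply]
            exact real_inner_comm _ _
    have htrace : ∀ t ∈ Set.Icc (0:ℝ) 1,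
        (∑ i, ⟪(t • Gmap k (t • x - y)) (e i), e i⟫_ℝ)
          = (t * (k:ℝ) / ‖t • x - y‖ ^ (k+2)) * (‖t • x - y‖^2 - ∑ i, ⟪t • x - y, e i⟫_ℝ ^ 2) := by
      intro t ht
      have hwt : t • x - y ≠ 0 := sub_ne_zero.2 (hne t ht)
      have hterm : ∀ i, ⟪(t • Gmap k (t • x - y)) (e i), e i⟫_ℝ
          = t * ⟪Gmap k (t • x - y) (e i), e i⟫_ℝ := by
        intro i
        rw [ContinuousLinearMap.smul_apply, real_inner_smul_left]
      rw [Finset.sum_congr rfl (fun i _ => hterm i), ← Finset.mul_sum,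
        trace_Gmap k _ hwt e he]
      ring
    have hinner_cont : ∀ i, IntervalIntegrable
        (fun t : ℝ => ⟪(t • Gmap k (t • x - y)) (e i), e i⟫_ℝ) MeasureTheory.volume 0 1 := by
      intro i
      apply ContinuousOn.intervalIntegrable
      rw [huIcc]
      exact (((ContinuousLinearMap.apply ℝ _ (e i)).continuous.comp_continuousOn
        (hGcont x hxball)).inner continuousOn_const)
    have hsum_int : ∑ i, ∫ t in (0:ℝ)..1, ⟪(t • Gmap k (t • x - y)) (e i), e i⟫_ℝ
        = ∫ t in (0:ℝ)..1, ∑ i, ⟪(t • Gmap k (t • x - y)) (e i), e i⟫_ℝ :=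
      (intervalIntegral.integral_finset_sum (fun i _ => hinner_cont i)).symm
    have hIfinal : ∑ i, ⟪I (e i), e i⟫_ℝ
        = ∫ t in (0:ℝ)..1, (t * (k:ℝ) / ‖t • x - y‖ ^ (k+2)) *
            (‖t • x - y‖^2 - ∑ i, ⟪t • x - y, e i⟫_ℝ ^ 2) := by
      rw [Finset.sum_congr rfl (fun i _ => hinner i), hsum_int]
      apply intervalIntegral.integral_congr
      intro t ht
      rw [huIcc] at ht
      exact htrace t ht
    have hsplit : ∀ i, ⟪(((1:ℝ)/2) • ContinuousLinearMap.id ℝ (EuclideanSpace ℝ (Fin n))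
        - Gmap k (x - y) - c • I) (e i), e i⟫_ℝ
        = (1/2 : ℝ) - ⟪Gmap k (x-y) (e i), e i⟫_ℝ - c * ⟪I (e i), e i⟫_ℝ := by
      intro i
      simp only [ContinuousLinearMap.coe_sub', Pi.sub_apply, ContinuousLinearMap.smul_apply,
        ContinuousLinearMap.coe_smul', Pi.smul_apply, ContinuousLinearMap.coe_id', id_eq,
        inner_sub_left, real_inner_smul_left, hee i]
      ring
    rw [Finset.sum_congr rfl (fun i _ => hsplit i), Finset.sum_sub_distrib,
      Finset.sum_sub_distrib, Finset.sum_const, ← Finset.mul_sum,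
      trace_Gmap k _ hw0 e he, hIfinal]
    simp only [Finset.card_univ, Fintype.card_fin, nsmul_eq_mul]
    ring
end
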